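/- With D = aD₁ + bD₂ for D₁, D₂ ⊆ F_2^m, the Lee weight of c_D(aα + bβ) equals |D| − |D₂| · Σ_{t₁∈D₁} (-1)^{α·t₁}. -/

import Mathlib

open Finset

/-- The non-unital commutative ring `I` of order 4, with elements `0, a, b, c`. -/
inductive Ri : Type
  | zero | a | b | c
deriving DecidableEq

instance : Fintype Ri :=
  ⟨⟨↑[Ri.zero, Ri.a, Ri.b, Ri.c], by decide⟩, fun x => by cases x <;> decide⟩

namespace Ri

/-- Addition table of `I` (the Klein four-group). -/
def add' : Ri → Ri → Ri
  | .zero, x => x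
  | x, .zero => x
  | .a, .a => .zero
  | .a, .b => .c
  | .a, .c => .b
  | .b, .a => .c
  | .b, .b => .zero
  | .b, .c => .a
  | .c, .a => .b
  | .c, .b => .a
  | .c, .c => .zero

/-- Multiplication table of `I`: `a·a = b`, `a·c = c·a = b`, `c·c = b`, all else `0`. -/
def mul' : Ri → Ri → Ri
  | .a, .a => .b
  | .a, .c => .b
  | .c, .a => .b
  | .c, .c => .b
  | _, _ => .zero

instance : Zero Ri := ⟨Ri.zero⟩
instance : Add Ri := ⟨add'⟩
instance : Mul Ri := ⟨mul'⟩
instance : Neg Ri := ⟨fun x => x⟩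

instance : NonUnitalCommRing Ri where
  add_assoc := by decide
  zero_add := by decide
  add_zero := by decide
  add_comm := by decide
  neg_add_cancel := by decide
  left_distrib := by decide
  right_distrib := by decide
  zero_mul := by decide
  mul_zero := by decide
  mul_assoc := by decide
  mul_comm := by decide
  nsmul := nsmulRec
  zsmul := zsmulRec

/-- The action of `𝔽₂` on `I`: `0·x = 0` and `1·x = x`. -/
def smulF (s : ZMod 2) (x : Ri) : Ri := if s = 1 then x else 0

/-- The element `a·s + b·t` of `I`, for `s, t ∈ 𝔽₂`. -/
def ofPair (s t : ZMod 2) : Ri := smulF s Ri.a + smulF t Ri.b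

/-- The Gray map `Φ(a·s + b·t) = (t, s + t)`. -/
def gray : Ri → ZMod 2 × ZMod 2
  | .zero => (0, 0)
  | .a => (0, 1)
  | .b => (1, 1)
  | .c => (1, 0)

end Ri

/-- Hamming weight of a pair of bits. -/
def wt2 (p : ZMod 2 × ZMod 2) : ℕ :=
  (if p.1 = 1 then 1 else 0) + (if p.2 = 1 then 1 else 0)

/-- Lee weight of a vector over `I`, i.e. the Hamming weight of its Gray image. -/
def leeWt {m : ℕ} (x : Fin m → Ri) : ℕ := ∑ i, wt2 (Ri.gray (x i))

/-- The vector `aα + bβ ∈ I^m`. -/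
def vecI {m : ℕ} (α β : Fin m → ZMod 2) : Fin m → Ri := fun i => Ri.ofPair (α i) (β i)

def bhom : ZMod 2 →+ Ri where
  toFun x := Ri.smulF x Ri.b
  map_zero' := by decide
  map_add' := by decide

lemma mul_pair (s t s' t' : ZMod 2) :
    Ri.ofPair s t * Ri.ofPair s' t' = bhom (s * s') := by revert s t s' t'; decide

lemma wt_bhom (v : ZMod 2) : (wt2 (Ri.gray (bhom v)) : ℤ) = 1 - (-1) ^ v.val := by
  revert v; decide

theorem lee_weight_formula (m : ℕ) (D₁ D₂ : Finset (Fin m → ZMod 2))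
    (α β : Fin m → ZMod 2) :
    ((∑ p ∈ D₁ ×ˢ D₂, wt2 (Ri.gray (∑ i, vecI α β i * vecI p.1 p.2 i))) : ℤ)
      = (D₁.card * D₂.card : ℤ)
        - (D₂.card : ℤ) * ∑ t₁ ∈ D₁, (-1 : ℤ) ^ ((∑ i, α i * t₁ i : ZMod 2)).val := by
  have key : ∀ t₁ t₂ : Fin m → ZMod 2,
      ((wt2 (Ri.gray (∑ i, vecI α β i * vecI t₁ t₂ i))) : ℤ)
        = 1 - (-1) ^ ((∑ i, α i * t₁ i : ZMod 2)).val := by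
    intro t₁ t₂
    have : (∑ i, vecI α β i * vecI t₁ t₂ i) = bhom (∑ i, α i * t₁ i) := by
      rw [map_sum]
      exact Finset.sum_congr rfl fun i _ => mul_pair _ _ _ _
    rw [this, wt_bhom]
  rw [Finset.sum_product]
  push_cast
  rw [Finset.sum_congr rfl fun t₁ _ => Finset.sum_congr rfl fun t₂ _ => key t₁ t₂]
  simp only [Finset.sum_const, nsmul_eq_mul, Finset.sum_sub_distrib, Finset.mul_sum,
    mul_sub, mul_one]
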